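/- Let φ = 2h/ε > 0 with sin(φ/2) ≥ 5/M for a positive integer M. Then the trigonometric sum satisfies ∑_{j=1}^{M} j² sin²(x_{N-2M+j-1/2}/ε) ≥ M³/12, where x_k = kh and x_{k-1/2} = (k - 1/2)h. -/

import Mathlib

/-!
Since `sin² x = (1 - cos 2x) / 2`, the sum is half of `∑ j² ≥ M³ / 3` minus half an
oscillatory sum `∑ j² cos (b + jφ)`. The latter is the real part of a rotation of `∑ j² zʲ`
with `z = e^{iφ}`, and three rounds of summation by parts, each dividing by
`|z - 1| = 2 sin (φ / 2) ≥ 10 / M`, bound its modulus by `M³ / 6`.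
-/

open Real

section SummationByParts

variable {R : Type*} [CommRing R] (z : R) (M : ℕ)

theorem sub_one_mul_sum_Icc_pow :
    (z - 1) * ∑ j ∈ Finset.Icc 1 M, z ^ j = z ^ (M + 1) - z := by
  induction M with
  | zero => simp
  | succ n ih =>
    rw [Finset.sum_Icc_succ_top (by omega), mul_add, ih]
    ring

theorem sub_one_mul_sum_Icc_mul_pow :
    (z - 1) * ∑ j ∈ Finset.Icc 1 M, (j : R) * z ^ j =
      M * z ^ (M + 1) - ∑ j ∈ Finset.Icc 1 M, z ^ j := by
  induction M with
  | zero => simp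
  | succ n ih =>
    rw [Finset.sum_Icc_succ_top (by omega), Finset.sum_Icc_succ_top (by omega), mul_add, ih]
    push_cast
    ring

theorem sub_one_mul_sum_Icc_sq_mul_pow :
    (z - 1) * ∑ j ∈ Finset.Icc 1 M, (j : R) ^ 2 * z ^ j =
      M ^ 2 * z ^ (M + 1) - 2 * ∑ j ∈ Finset.Icc 1 M, (j : R) * z ^ j
        + ∑ j ∈ Finset.Icc 1 M, z ^ j := by
  induction M with
  | zero => simp
  | succ n ih =>
    rw [Finset.sum_Icc_succ_top (by omega),
      Finset.sum_Icc_succ_top (by omega) (fun j => (j : R) * z ^ j),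
      Finset.sum_Icc_succ_top (by omega) (fun j => z ^ j), mul_add, ih]
    push_cast
    ring

end SummationByParts

theorem cube_div_three_le_sum_Icc_sq (M : ℕ) :
    (M : ℝ) ^ 3 / 3 ≤ ∑ j ∈ Finset.Icc 1 M, (j : ℝ) ^ 2 := by
  induction M with
  | zero => simp
  | succ n ih =>
    rw [Finset.sum_Icc_succ_top (by omega)]
    push_cast
    nlinarith [n.cast_nonneg (α := ℝ)]

theorem le_cube_div_six_of_summation_by_parts {M d a b c : ℝ} (hM : 1 ≤ M) (hd : 10 ≤ M * d)
    (ha : 0 ≤ a) (hb : 0 ≤ b) (hc : 0 ≤ c)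
    (hda : d * a ≤ 2) (hdb : d * b ≤ M + a) (hdc : d * c ≤ M ^ 2 + 2 * b + a) :
    c ≤ M ^ 3 / 6 := by
  have ha' : 10 * a ≤ 2 * M := by nlinarith
  have hb' : 10 * b ≤ M * (M + a) := by nlinarith
  have hc' : 10 * c ≤ M * (M ^ 2 + 2 * b + a) := by nlinarith
  nlinarith

theorem norm_sum_Icc_sq_mul_pow_le {z : ℂ} (hz : ‖z‖ = 1) {M : ℕ}
    (hd : 10 ≤ M * ‖z - 1‖) :
    ‖∑ j ∈ Finset.Icc 1 M, (j : ℂ) ^ 2 * z ^ j‖ ≤ (M : ℝ) ^ 3 / 6 := by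
  have hpow (n : ℕ) : ‖z ^ n‖ = 1 := by rw [norm_pow, hz, one_pow]
  have hM : (1 : ℝ) ≤ M := by
    rcases Nat.eq_zero_or_pos M with rfl | hM
    · norm_num at hd
    · exact_mod_cast hM
  set A := ∑ j ∈ Finset.Icc 1 M, z ^ j
  set B := ∑ j ∈ Finset.Icc 1 M, (j : ℂ) * z ^ j
  refine le_cube_div_six_of_summation_by_parts hM hd (norm_nonneg A) (norm_nonneg B)
    (norm_nonneg _) ?_ ?_ ?_ <;> rw [← norm_mul]
  · calc ‖(z - 1) * A‖ = ‖z ^ (M + 1) - z‖ := by rw [sub_one_mul_sum_Icc_pow]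
      _ ≤ ‖z ^ (M + 1)‖ + ‖z‖ := norm_sub_le _ _
      _ = 2 := by rw [hpow, hz]; norm_num
  · calc ‖(z - 1) * B‖ = ‖M * z ^ (M + 1) - A‖ := by rw [sub_one_mul_sum_Icc_mul_pow]
      _ ≤ ‖(M : ℂ) * z ^ (M + 1)‖ + ‖A‖ := norm_sub_le _ _
      _ = M + ‖A‖ := by rw [norm_mul, hpow, Complex.norm_natCast, mul_one]
  · calc ‖(z - 1) * ∑ j ∈ Finset.Icc 1 M, (j : ℂ) ^ 2 * z ^ j‖
          = ‖M ^ 2 * z ^ (M + 1) - 2 * B + A‖ := by rw [sub_one_mul_sum_Icc_sq_mul_pow]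
      _ ≤ ‖(M : ℂ) ^ 2 * z ^ (M + 1)‖ + ‖2 * B‖ + ‖A‖ :=
          (norm_add_le _ _).trans (add_le_add_left (norm_sub_le _ _) _)
      _ = M ^ 2 + 2 * ‖B‖ + ‖A‖ := by
          rw [norm_mul, norm_mul, hpow, norm_pow, Complex.norm_natCast, Complex.norm_two,
            mul_one]

theorem sum_Icc_sq_mul_cos_eq_re (b φ : ℝ) (M : ℕ) :
    ∑ j ∈ Finset.Icc 1 M, (j : ℝ) ^ 2 * cos (b + j * φ) =
      (Complex.exp (b * Complex.I) *
        ∑ j ∈ Finset.Icc 1 M, (j : ℂ) ^ 2 * Complex.exp (φ * Complex.I) ^ j).re := by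
  rw [Finset.mul_sum, Complex.re_sum]
  refine Finset.sum_congr rfl fun j _ => ?_
  have hterm : Complex.exp (b * Complex.I) * ((j : ℂ) ^ 2 * Complex.exp (φ * Complex.I) ^ j) =
      ((j ^ 2 : ℝ) : ℂ) * Complex.exp ((b + j * φ : ℝ) * Complex.I) := by
    rw [← Complex.exp_nat_mul, mul_left_comm, ← Complex.exp_add]
    push_cast
    ring_nf
  rw [hterm, Complex.re_ofReal_mul, Complex.exp_ofReal_mul_I_re]

theorem abs_sum_Icc_sq_mul_cos_le {b φ : ℝ} {M : ℕ} (hφ : 5 ≤ M * sin (φ / 2)) :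
    |∑ j ∈ Finset.Icc 1 M, (j : ℝ) ^ 2 * cos (b + j * φ)| ≤ (M : ℝ) ^ 3 / 6 := by
  rw [sum_Icc_sq_mul_cos_eq_re]
  refine (Complex.abs_re_le_norm _).trans ?_
  rw [norm_mul, Complex.norm_exp_ofReal_mul_I, one_mul]
  refine norm_sum_Icc_sq_mul_pow_le (Complex.norm_exp_ofReal_mul_I φ) ?_
  rw [mul_comm (φ : ℂ), Complex.norm_exp_I_mul_ofReal_sub_one, norm_mul, Real.norm_two]
  nlinarith [le_abs_self (sin (φ / 2)), Real.norm_eq_abs (sin (φ / 2))]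

theorem cube_div_twelve_le_sum_Icc_sq_mul_sin_sq {b φ : ℝ} {M : ℕ}
    (hφ : 5 ≤ M * sin (φ / 2)) :
    (M : ℝ) ^ 3 / 12 ≤
      ∑ j ∈ Finset.Icc 1 M, (j : ℝ) ^ 2 * sin ((b + j * φ) / 2) ^ 2 := by
  have hhalf : ∑ j ∈ Finset.Icc 1 M, (j : ℝ) ^ 2 * sin ((b + j * φ) / 2) ^ 2 =
      (∑ j ∈ Finset.Icc 1 M, (j : ℝ) ^ 2 -
        ∑ j ∈ Finset.Icc 1 M, (j : ℝ) ^ 2 * cos (b + j * φ)) / 2 := by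
    rw [← Finset.sum_sub_distrib, Finset.sum_div]
    refine Finset.sum_congr rfl fun j _ => ?_
    rw [sin_sq_eq_half_sub, mul_div_cancel₀ _ two_ne_zero]
    ring
  rw [hhalf]
  linarith [cube_div_three_le_sum_Icc_sq M,
    (abs_le.mp (abs_sum_Icc_sq_mul_cos_le (b := b) hφ)).2]

theorem stmt_11_general (h ε : ℝ) (N M : ℕ) (hM : 0 < M)
    (hsin : Real.sin ((2 * h / ε) / 2) ≥ 5 / M) :
    ∑ j ∈ Finset.Icc 1 M,
        (j : ℝ) ^ 2 * Real.sin ((((N : ℝ) - 2 * M + j - 1 / 2) * h) / ε) ^ 2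
      ≥ (M : ℝ) ^ 3 / 12 := by
  have hφ : 5 ≤ M * sin ((2 * h / ε) / 2) := by
    rwa [ge_iff_le, div_le_iff₀ (by exact_mod_cast hM), mul_comm] at hsin
  have hx (j : ℕ) : (((N : ℝ) - 2 * M + j - 1 / 2) * h) / ε =
      ((2 * N - 4 * M - 1) * h / ε + j * (2 * h / ε)) / 2 := by ring
  simp only [hx]
  exact cube_div_twelve_le_sum_Icc_sq_mul_sin_sq hφ

theorem stmt_11 (h ε : ℝ) (N M : ℕ) (hh : 0 < h) (hε : 0 < ε) (hM : 0 < M)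
    (hsmall : h / ε ≤ π / 2)
    (hsin : Real.sin ((2 * h / ε) / 2) ≥ 5 / M) :
    ∑ j ∈ Finset.Icc 1 M,
        (j : ℝ) ^ 2 * Real.sin ((((N : ℝ) - 2 * M + j - 1 / 2) * h) / ε) ^ 2
      ≥ (M : ℝ) ^ 3 / 12 :=
  stmt_11_general h ε N M hM hsin
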